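/- arXiv:0805.4506 — 2 statements merged into one kernel-verified Lean document; each statement's English description precedes it below -/
import Mathlib

section
/- A compact Kähler manifold M with holomorphically trivial tangent bundle, trivialized by left-invariant fields of a simply connected complex Lie group G acting simply transitively, is a complex torus; equivalently, if every global holomorphic 1-form on M is closed and TM is trivialized by global holomorphic vector fields X_1,...,X_n with constant bracket structure constants, then all structure constants vanish. -/
open scoped Manifold Topology

/-!
Fix `k` and let `ω` be the `k`-th form of the coframe dual to the frame `X`. It is holomorphic:
in a chart it is a fixed covector composed with the inverse of the holomorphic frame matrix.
As `ω(X_i)` and `ω(X_j)` are constant, Cartan's formula gives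
`dω(X_i, X_j) = -ω([X_i, X_j]) = -c_k^{ij}`, and `dω = 0` because holomorphic 1-forms are closed.
-/

/-- Local chart representative of a vector field (see STATEMENT 0). -/
noncomputable def chartField {E : Type*} [NormedAddCommGroup E] [NormedSpace ℂ E]
    {M : Type*} [TopologicalSpace M] [ChartedSpace E M]
    [IsManifold 𝓘(ℂ, E) (⊤ : ℕ∞) M]
    (X : (m : M) → TangentSpace 𝓘(ℂ, E) m) (x : M) : E → E :=
  fun y =>
    tangentCoordChange 𝓘(ℂ, E) ((extChartAt 𝓘(ℂ, E) x).symm y) x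
      ((extChartAt 𝓘(ℂ, E) x).symm y) (X ((extChartAt 𝓘(ℂ, E) x).symm y))

/-- Local chart representative of a holomorphic 1-form. -/
noncomputable def chartForm {E : Type*} [NormedAddCommGroup E] [NormedSpace ℂ E]
    {M : Type*} [TopologicalSpace M] [ChartedSpace E M]
    [IsManifold 𝓘(ℂ, E) (⊤ : ℕ∞) M]
    (ω : (m : M) → TangentSpace 𝓘(ℂ, E) m →L[ℂ] ℂ) (x : M) : E → (E →L[ℂ] ℂ) :=
  fun y =>
    (ω ((extChartAt 𝓘(ℂ, E) x).symm y)).comp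
      (tangentCoordChange 𝓘(ℂ, E) x ((extChartAt 𝓘(ℂ, E) x).symm y)
        ((extChartAt 𝓘(ℂ, E) x).symm y))

section Calculus

variable {𝕜 : Type*} [NontriviallyNormedField 𝕜]
  {E E' F : Type*} [NormedAddCommGroup E] [NormedSpace 𝕜 E]
  [NormedAddCommGroup E'] [NormedSpace 𝕜 E'] [NormedAddCommGroup F] [NormedSpace 𝕜 F]

theorem differentiableAt_of_eventually_comp_eq [CompleteSpace E] {Ψ : E' → E →L[𝕜] E}
    {φ : E' → E →L[𝕜] F} {ψ : E →L[𝕜] F} {y₀ : E'}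
    (hΨ : DifferentiableAt 𝕜 Ψ y₀) (hΨ₀ : IsUnit (Ψ y₀))
    (h : ∀ᶠ y in 𝓝 y₀, (φ y).comp (Ψ y) = ψ) : DifferentiableAt 𝕜 φ y₀ := by
  have hunit : ∀ᶠ y in 𝓝 y₀, IsUnit (Ψ y) :=
    hΨ.continuousAt.eventually (Units.isOpen.mem_nhds hΨ₀)
  have heq : (fun y => ψ.comp (Ring.inverse (Ψ y))) =ᶠ[𝓝 y₀] φ := by
    filter_upwards [h, hunit] with y hy hu
    rw [← hy, ContinuousLinearMap.comp_assoc, ← ContinuousLinearMap.mul_def,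
      Ring.mul_inverse_cancel _ hu, ContinuousLinearMap.one_def, ContinuousLinearMap.comp_id]
  exact ((ContinuousLinearMap.compL 𝕜 E E F ψ).differentiableAt.comp y₀
    (hΨ.inverse hΨ₀)).congr_of_eventuallyEq heq.symm

/-- Near `y₀`, `φ y` is `b.constrL a` composed with the inverse of the frame matrix. -/
theorem differentiableAt_of_eventually_apply_frame_eq [CompleteSpace 𝕜] [FiniteDimensional 𝕜 E]
    {ι : Type*} [Fintype ι] (b : Module.Basis ι 𝕜 E) {V : ι → E' → E} {y₀ : E'}
    (hV : ∀ i, DifferentiableAt 𝕜 (V i) y₀) (hV₀ : ∀ i, V i y₀ = b i)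
    {φ : E' → E →L[𝕜] F} {a : ι → F} (hφ : ∀ᶠ y in 𝓝 y₀, ∀ i, φ y (V i y) = a i) :
    DifferentiableAt 𝕜 φ y₀ := by
  classical
  have := FiniteDimensional.complete 𝕜 E
  let Ψ : E' → E →L[𝕜] E := fun y => ∑ i, (b.coord i).toContinuousLinearMap.smulRight (V i y)
  have hΨb : ∀ y i, Ψ y (b i) = V i y := by
    intro y i
    simp [Ψ, Finsupp.single_apply]
  have hΨ₀ : Ψ y₀ = 1 := by
    apply ContinuousLinearMap.coe_injective
    refine b.ext fun i => ?_
    simp [hΨb, hV₀]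
  refine differentiableAt_of_eventually_comp_eq (ψ := b.constrL a) ?_ (hΨ₀ ▸ isUnit_one) ?_
  · exact DifferentiableAt.fun_sum fun i _ =>
      (ContinuousLinearMap.smulRightL 𝕜 E E
        (b.coord i).toContinuousLinearMap).differentiableAt.comp y₀ (hV i)
  · filter_upwards [hφ] with y hy
    apply ContinuousLinearMap.coe_injective
    refine b.ext fun i => ?_
    simp [hΨb, hy]

/-- The coordinate form of `dω(V, W) = V ω(W) - W ω(V) - ω([V, W])`. -/
theorem apply_lieBracket_eq_fderiv_sub_fderiv {φ : E → E →L[𝕜] F} {V W : E → E} {y : E}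
    (hφ : DifferentiableAt 𝕜 φ y) (hV : DifferentiableAt 𝕜 V y) (hW : DifferentiableAt 𝕜 W y) :
    φ y (VectorField.lieBracket 𝕜 V W y) =
      fderiv 𝕜 (fun z => φ z (W z)) y (V y) - fderiv 𝕜 (fun z => φ z (V z)) y (W y)
        - (fderiv 𝕜 φ y (V y) (W y) - fderiv 𝕜 φ y (W y) (V y)) := by
  rw [fderiv_clm_apply hφ hW, fderiv_clm_apply hφ hV, VectorField.lieBracket]
  simp only [add_apply, ContinuousLinearMap.comp_apply,
    ContinuousLinearMap.flip_apply, map_sub]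
  abel

end Calculus

theorem tangentCoordChange_apply_tangentCoordChange {𝕜 : Type*} [NontriviallyNormedField 𝕜]
    {E : Type*} [NormedAddCommGroup E] [NormedSpace 𝕜 E] {H : Type*} [TopologicalSpace H]
    {I : ModelWithCorners 𝕜 E H} {M : Type*} [TopologicalSpace M] [ChartedSpace H M]
    [IsManifold I 1 M] {x p : M} (hp : p ∈ (extChartAt I x).source) (v : E) :
    tangentCoordChange I x p p (tangentCoordChange I p x p v) = v := by
  rw [tangentCoordChange_comp ⟨⟨mem_extChartAt_source (I := I) p, hp⟩,
    mem_extChartAt_source p⟩, tangentCoordChange_self (mem_extChartAt_source p)]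

section Charts

variable {E : Type*} [NormedAddCommGroup E] [NormedSpace ℂ E]
  {M : Type*} [TopologicalSpace M] [ChartedSpace E M] [IsManifold 𝓘(ℂ, E) (⊤ : ℕ∞) M]

theorem chartField_apply_extChartAt_self (X : (m : M) → TangentSpace 𝓘(ℂ, E) m) (x : M) :
    chartField X x (extChartAt 𝓘(ℂ, E) x x) = X x := by
  have h : ∀ p : M, p = x → tangentCoordChange 𝓘(ℂ, E) p x p (X p) = X x := by
    rintro p rfl
    exact tangentCoordChange_self (mem_extChartAt_source p)
  exact h _ (extChartAt_to_inv x)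

theorem chartForm_apply_extChartAt_self (ω : (m : M) → TangentSpace 𝓘(ℂ, E) m →L[ℂ] ℂ)
    (x : M) : chartForm ω x (extChartAt 𝓘(ℂ, E) x x) = ω x := by
  have h : ∀ p : M, p = x → ∀ v : E, ω p (tangentCoordChange 𝓘(ℂ, E) x p p v) = ω x v := by
    rintro p rfl v
    rw [tangentCoordChange_self (mem_extChartAt_source p)]
  ext v
  exact h _ (extChartAt_to_inv x) v

theorem chartForm_apply_chartField (ω : (m : M) → TangentSpace 𝓘(ℂ, E) m →L[ℂ] ℂ)
    (X : (m : M) → TangentSpace 𝓘(ℂ, E) m) (x : M) {y : E}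
    (hy : y ∈ (extChartAt 𝓘(ℂ, E) x).target) :
    chartForm ω x y (chartField X x y) =
      ω ((extChartAt 𝓘(ℂ, E) x).symm y) (X ((extChartAt 𝓘(ℂ, E) x).symm y)) :=
  congrArg (ω _)
    (tangentCoordChange_apply_tangentCoordChange ((extChartAt 𝓘(ℂ, E) x).map_target hy) _)

theorem chartField_differentiableAt {X : (m : M) → TangentSpace 𝓘(ℂ, E) m}
    (hX : ContMDiff 𝓘(ℂ, E) 𝓘(ℂ, E).tangent (⊤ : ℕ∞)
      (fun m => (⟨m, X m⟩ : TangentBundle 𝓘(ℂ, E) M))) (x : M) :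
    DifferentiableAt ℂ (chartField X x) (extChartAt 𝓘(ℂ, E) x x) := by
  -- In the chart at `x`, the trivialization coordinate of `X` is `chartField X x` by definition.
  have hcoord : ContMDiffAt 𝓘(ℂ, E) 𝓘(ℂ, E) (⊤ : ℕ∞)
      (fun m => (trivializationAt E (TangentSpace 𝓘(ℂ, E)) x
        (Bundle.TotalSpace.mk' E m (X m))).2) x :=
    (Bundle.contMDiffAt_section _).1 (hX x)
  have hcoord_chart : ContMDiffWithinAt 𝓘(ℂ, E) 𝓘(ℂ, E) (⊤ : ℕ∞)
      ((fun m => (trivializationAt E (TangentSpace 𝓘(ℂ, E)) x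
        (Bundle.TotalSpace.mk' E m (X m))).2) ∘ (extChartAt 𝓘(ℂ, E) x).symm)
      (extChartAt 𝓘(ℂ, E) x).target (extChartAt 𝓘(ℂ, E) x x) := by
    apply ContMDiffAt.comp_contMDiffWithinAt (I' := 𝓘(ℂ, E))
    · rwa [extChartAt_to_inv]
    · exact contMDiffOn_extChartAt_symm x _ (mem_extChartAt_target x)
  exact (contMDiffAt_iff_contDiffAt.1 (hcoord_chart.contMDiffAt (extChartAt_target_mem_nhds x))
    ).differentiableAt (by simp)

theorem chartForm_differentiableAt_of_apply_frame [FiniteDimensional ℂ E] {ι : Type*}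
    [Fintype ι] {X : ι → (m : M) → TangentSpace 𝓘(ℂ, E) m}
    (hX : ∀ i, ContMDiff 𝓘(ℂ, E) 𝓘(ℂ, E).tangent (⊤ : ℕ∞)
      (fun m => (⟨m, X i m⟩ : TangentBundle 𝓘(ℂ, E) M)))
    {ω : (m : M) → TangentSpace 𝓘(ℂ, E) m →L[ℂ] ℂ} {a : ι → ℂ}
    (hω : ∀ m i, ω m (X i m) = a i) (x : M) (b : Module.Basis ι ℂ E) (hb : ∀ i, b i = X i x) :
    DifferentiableAt ℂ (chartForm ω x) (extChartAt 𝓘(ℂ, E) x x) := by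
  refine differentiableAt_of_eventually_apply_frame_eq b (fun i => chartField_differentiableAt
    (hX i) x) (fun i => by rw [chartField_apply_extChartAt_self, hb]) (a := a) ?_
  filter_upwards [extChartAt_target_mem_nhds x] with y hy i
  rw [chartForm_apply_chartField ω (X i) x hy, hω]

theorem chartForm_apply_lieBracket_eq_zero {X Y : (m : M) → TangentSpace 𝓘(ℂ, E) m}
    (hX : ContMDiff 𝓘(ℂ, E) 𝓘(ℂ, E).tangent (⊤ : ℕ∞)
      (fun m => (⟨m, X m⟩ : TangentBundle 𝓘(ℂ, E) M)))
    (hY : ContMDiff 𝓘(ℂ, E) 𝓘(ℂ, E).tangent (⊤ : ℕ∞)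
      (fun m => (⟨m, Y m⟩ : TangentBundle 𝓘(ℂ, E) M)))
    {ω : (m : M) → TangentSpace 𝓘(ℂ, E) m →L[ℂ] ℂ} {x : M}
    (hω : DifferentiableAt ℂ (chartForm ω x) (extChartAt 𝓘(ℂ, E) x x))
    (hsymm : fderiv ℂ (chartForm ω x) (extChartAt 𝓘(ℂ, E) x x) (X x) (Y x) =
      fderiv ℂ (chartForm ω x) (extChartAt 𝓘(ℂ, E) x x) (Y x) (X x))
    {a b : ℂ} (hωX : ∀ m, ω m (X m) = a) (hωY : ∀ m, ω m (Y m) = b) :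
    chartForm ω x (extChartAt 𝓘(ℂ, E) x x)
      (VectorField.lieBracket ℂ (chartField X x) (chartField Y x)
      (extChartAt 𝓘(ℂ, E) x x)) = 0 := by
  have hconst : ∀ {Z : (m : M) → TangentSpace 𝓘(ℂ, E) m} {c : ℂ}, (∀ m, ω m (Z m) = c) →
      fderiv ℂ (fun y => chartForm ω x y (chartField Z x y)) (extChartAt 𝓘(ℂ, E) x x) = 0 := by
    intro Z c hZ
    have heq : (fun y => chartForm ω x y (chartField Z x y)) =ᶠ[𝓝 (extChartAt 𝓘(ℂ, E) x x)]
        fun _ => c := by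
      filter_upwards [extChartAt_target_mem_nhds x] with y hy
      rw [chartForm_apply_chartField ω Z x hy, hZ]
    rw [heq.fderiv_eq, fderiv_const_apply]
  rw [apply_lieBracket_eq_fderiv_sub_fderiv hω
    (chartField_differentiableAt hX x) (chartField_differentiableAt hY x), hconst hωX,
    hconst hωY, chartField_apply_extChartAt_self, chartField_apply_extChartAt_self, hsymm,
    sub_self, sub_zero]
  erw [zero_apply, sub_zero]

end Charts

theorem stmt_3_general {E : Type*} [NormedAddCommGroup E] [NormedSpace ℂ E]
    {M : Type*} [TopologicalSpace M] [ChartedSpace E M]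
    [IsManifold 𝓘(ℂ, E) (⊤ : ℕ∞) M]
    [ConnectedSpace M]
    (n : ℕ) (hn : Module.finrank ℂ E = n)
    (X : Fin n → (m : M) → TangentSpace 𝓘(ℂ, E) m)
    (hX : ∀ i, ContMDiff 𝓘(ℂ, E) 𝓘(ℂ, E).tangent (⊤ : ℕ∞)
      (fun m => (⟨m, X i m⟩ : TangentBundle 𝓘(ℂ, E) M)))
    (hspan : ∀ m : M, Submodule.span ℂ (Set.range fun i => X i m) = ⊤)
    -- constant structure constants: [X_i, X_j] = Σ_k c_k^{ij} X_k in charts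
    (c : Fin n → Fin n → Fin n → ℂ)
    (hbracket : ∀ i j, ∀ x : M,
      VectorField.lieBracket ℂ (chartField (X i) x) (chartField (X j) x)
        (extChartAt 𝓘(ℂ, E) x x) = ∑ k, c i j k • X k x)
    -- the Kähler hypothesis, used only through: every global holomorphic
    -- 1-form on M is closed
    (hclosed : ∀ ω : (m : M) → TangentSpace 𝓘(ℂ, E) m →L[ℂ] ℂ,
      (∀ x : M, DifferentiableAt ℂ (chartForm ω x) (extChartAt 𝓘(ℂ, E) x x)) →
      ∀ x : M, ∀ u v : E,
        fderiv ℂ (chartForm ω x) (extChartAt 𝓘(ℂ, E) x x) u v =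
          fderiv ℂ (chartForm ω x) (extChartAt 𝓘(ℂ, E) x x) v u) :
    ∀ i j k, c i j k = 0 := by
  intro i j k
  have : FiniteDimensional ℂ E := Module.finite_of_finrank_pos (hn ▸ i.pos)
  obtain ⟨x⟩ : Nonempty M := inferInstance
  let B : (m : M) → Module.Basis (Fin n) ℂ E := fun m =>
    basisOfTopLeSpanOfCardEqFinrank (fun l => X l m) (hspan m).ge (by simp [hn])
  have hB : ∀ m l, B m l = X l m := fun m =>
    congrFun (coe_basisOfTopLeSpanOfCardEqFinrank _ _ _)
  let ω : (m : M) → TangentSpace 𝓘(ℂ, E) m →L[ℂ] ℂ := fun m =>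
    ((B m).coord k).toContinuousLinearMap
  have hωX : ∀ m l, ω m (X l m) = if l = k then 1 else 0 := by
    intro m l
    change (B m).coord k (X l m) = _
    rw [← hB, Module.Basis.coord_apply, Module.Basis.repr_self, Finsupp.single_apply]
  have hω : ∀ m, DifferentiableAt ℂ (chartForm ω m) (extChartAt 𝓘(ℂ, E) m m) := fun m =>
    chartForm_differentiableAt_of_apply_frame hX hωX m (B m) (hB m)
  have hzero := chartForm_apply_lieBracket_eq_zero (hX i) (hX j) (hω x)
    (hclosed ω hω x _ _) (hωX · i) (hωX · j)
  rw [hbracket] at hzero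
  -- `erw`: `TangentSpace 𝓘(ℂ, E) x` is `E` only after unfolding.
  erw [chartForm_apply_extChartAt_self, map_sum,
    Finset.sum_congr rfl fun l _ => (ω x).map_smul (c i j l) (X l x)] at hzero
  simpa [hωX] using hzero

/-- A compact Kähler manifold with holomorphically trivial
tangent bundle, trivialized by fields with constant structure constants, is a
complex torus.  Equivalently: if every global holomorphic 1-form on `M` is
closed (the consequence of the Kähler hypothesis) and `TM` is trivialized by
global holomorphic vector fields `X_1, ..., X_n` with
`[X_i, X_j] = Σ_k c_k^{ij} X_k` for constants `c_k^{ij}`, then all the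
structure constants `c_k^{ij}` vanish (the Lie algebra is abelian, `M` is a
torus). -/
theorem stmt_3 {E : Type*} [NormedAddCommGroup E] [NormedSpace ℂ E]
    {M : Type*} [TopologicalSpace M] [ChartedSpace E M]
    [IsManifold 𝓘(ℂ, E) (⊤ : ℕ∞) M]
    [CompactSpace M] [ConnectedSpace M]
    (n : ℕ) (hn : Module.finrank ℂ E = n)
    (X : Fin n → (m : M) → TangentSpace 𝓘(ℂ, E) m)
    (hX : ∀ i, ContMDiff 𝓘(ℂ, E) 𝓘(ℂ, E).tangent (⊤ : ℕ∞)
      (fun m => (⟨m, X i m⟩ : TangentBundle 𝓘(ℂ, E) M)))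
    (hspan : ∀ m : M, Submodule.span ℂ (Set.range fun i => X i m) = ⊤)
    -- constant structure constants: [X_i, X_j] = Σ_k c_k^{ij} X_k in charts
    (c : Fin n → Fin n → Fin n → ℂ)
    (hbracket : ∀ i j, ∀ x : M,
      VectorField.lieBracket ℂ (chartField (X i) x) (chartField (X j) x)
        (extChartAt 𝓘(ℂ, E) x x) = ∑ k, c i j k • X k x)
    -- the Kähler hypothesis, used only through: every global holomorphic
    -- 1-form on M is closed
    (hclosed : ∀ ω : (m : M) → TangentSpace 𝓘(ℂ, E) m →L[ℂ] ℂ,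
      (∀ x : M, DifferentiableAt ℂ (chartForm ω x) (extChartAt 𝓘(ℂ, E) x x)) →
      ∀ x : M, ∀ u v : E,
        fderiv ℂ (chartForm ω x) (extChartAt 𝓘(ℂ, E) x x) u v =
          fderiv ℂ (chartForm ω x) (extChartAt 𝓘(ℂ, E) x x) v u) :
    ∀ i j k, c i j k = 0 :=
  stmt_3_general n hn X hX hspan c hbracket hclosed
end

section
/- In the complexified Euclidean isometry group O(3,ℂ) ⋉ ℂ³ acting on ℂ³ preserving the flat holomorphic Riemannian metric dz₁² + dz₂² + dz₃², there exists a closed complex subgroup isomorphic to the 3-dimensional complex Heisenberg group acting simply transitively on ℂ³. -/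
open Complex Matrix


/-- The 3-dimensional complex Heisenberg group: ℂ³ with the group law of the
upper triangular unipotent 3×3 matrices `(1 a c; 0 1 b; 0 0 1)`. -/
def Heis : Type := ℂ × ℂ × ℂ

noncomputable instance : TopologicalSpace Heis := inferInstanceAs (TopologicalSpace (ℂ × ℂ × ℂ))

noncomputable instance : Group Heis where
  mul x y := (x.1 + y.1, x.2.1 + y.2.1, x.2.2 + y.2.2 + x.1 * y.2.1)
  one := ((0 : ℂ), (0 : ℂ), (0 : ℂ))
  inv x := (-x.1, -x.2.1, -x.2.2 + x.1 * x.2.1)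
  mul_assoc x y z := by
    refine Prod.ext ?_ (Prod.ext ?_ ?_)
    · change (x.1 + y.1) + z.1 = x.1 + (y.1 + z.1); ring
    · change (x.2.1 + y.2.1) + z.2.1 = x.2.1 + (y.2.1 + z.2.1); ring
    · change (x.2.2 + y.2.2 + x.1 * y.2.1) + z.2.2 + (x.1 + y.1) * z.2.1 =
        x.2.2 + (y.2.2 + z.2.2 + y.1 * z.2.1) + x.1 * (y.2.1 + z.2.1)
      ring
  one_mul x := by
    refine Prod.ext ?_ (Prod.ext ?_ ?_)
    · change (0 : ℂ) + x.1 = x.1; ring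
    · change (0 : ℂ) + x.2.1 = x.2.1; ring
    · change (0 : ℂ) + x.2.2 + 0 * x.2.1 = x.2.2; ring
  mul_one x := by
    refine Prod.ext ?_ (Prod.ext ?_ ?_)
    · change x.1 + (0 : ℂ) = x.1; ring
    · change x.2.1 + (0 : ℂ) = x.2.1; ring
    · change x.2.2 + (0 : ℂ) + x.1 * 0 = x.2.2; ring
  inv_mul_cancel x := by
    refine Prod.ext ?_ (Prod.ext ?_ ?_)
    · change -x.1 + x.1 = (0 : ℂ); ring
    · change -x.2.1 + x.2.1 = (0 : ℂ); ring
    · change (-x.2.2 + x.1 * x.2.1) + x.2.2 + (-x.1) * x.2.1 = (0 : ℂ); ring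

noncomputable def AM (a : ℂ) : Matrix (Fin 3) (Fin 3) ℂ :=
  !![1, a, I*a; -a, 1 - a^2/2, -(I*(a^2/2)); -(I*a), -(I*(a^2/2)), 1 + a^2/2]

noncomputable def vv (a b c : ℂ) : Fin 3 → ℂ :=
  ![a^2/2 + I*b, a - a^3/6 - I*c, -(I*(a^3/6)) + c]

lemma I3 : (I:ℂ)^3 = -I := by rw [pow_succ, Complex.I_sq]; ring
lemma I4 : (I:ℂ)^4 = 1 := by rw [pow_succ, I3, neg_mul, Complex.I_mul_I]; ring
lemma I5 : (I:ℂ)^5 = I := by rw [pow_succ, I4]; ring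
lemma I6 : (I:ℂ)^6 = -1 := by rw [pow_succ, I5, Complex.I_mul_I]
lemma I7 : (I:ℂ)^7 = -I := by rw [pow_succ, I6]; ring
lemma I8 : (I:ℂ)^8 = 1 := by rw [pow_succ, I7, neg_mul, Complex.I_mul_I]; ring
lemma I9 : (I:ℂ)^9 = I := by rw [pow_succ, I8]; ring

lemma AM_transpose (a : ℂ) : (AM a)ᵀ =
    !![1, -a, -(I*a); a, 1 - a^2/2, -(I*(a^2/2)); I*a, -(I*(a^2/2)), 1 + a^2/2] := by
  ext i j
  fin_cases i <;> fin_cases j <;> simp [AM, Matrix.transpose_apply]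

lemma AM_mul (a a' : ℂ) : AM a * AM a' = AM (a + a') := by
  ext i j
  fin_cases i <;> fin_cases j <;>
    simp [AM, Matrix.mul_apply, Fin.sum_univ_three] <;>
    ring_nf <;> simp [Complex.I_sq, I3, I4, I5, I6, I7, I8, I9] <;>
    all_goals ring

lemma AM_orth (a : ℂ) : AM a * (AM a)ᵀ = 1 := by
  rw [AM_transpose]
  ext i j
  fin_cases i <;> fin_cases j <;>
    simp [AM, Matrix.mul_apply, Fin.sum_univ_three, Matrix.one_apply] <;>
    ring_nf <;> simp [Complex.I_sq, I3, I4, I5, I6, I7, I8, I9] <;>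
    all_goals ring

lemma cocycle (a b c a' b' c' : ℂ) :
    (AM a).mulVec (vv a' b' c') + vv a b c = vv (a + a') (b + b') (c + c' + a * b') := by
  funext j
  fin_cases j <;>
    simp [AM, vv, Matrix.mulVec, dotProduct, Fin.sum_univ_three] <;>
    ring_nf <;> simp [Complex.I_sq, I3, I4, I5, I6, I7, I8, I9] <;>
    all_goals ring

noncomputable def phi (h : Heis) : Matrix (Fin 3) (Fin 3) ℂ × (Fin 3 → ℂ) :=
  (AM h.1, vv h.1 h.2.1 h.2.2)

noncomputable def psi (p : Matrix (Fin 3) (Fin 3) ℂ × (Fin 3 → ℂ)) : Heis :=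
  (p.1 0 1, -I * (p.2 0 - (p.1 0 1)^2/2), p.2 2 + I * ((p.1 0 1)^3/6))

lemma psi_phi (h : Heis) : psi (phi h) = h := by
  obtain ⟨a, b, c⟩ := h
  refine Prod.ext ?_ (Prod.ext ?_ ?_)
  · simp [psi, phi, AM]
  · show -I * (vv a b c 0 - (AM a 0 1)^2/2) = b
    simp [vv, AM]
    all_goals ring_nf
    all_goals simp [Complex.I_sq, I3, I4, I5, I6, I7, I8, I9]
    all_goals ring
  · show vv a b c 2 + I * ((AM a 0 1)^3/6) = c
    simp [vv, AM]
    all_goals ring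

noncomputable def ga (x y : Fin 3 → ℂ) : ℂ := y 1 + I * y 2 - x 1 - I * x 2

noncomputable def gi (x y : Fin 3 → ℂ) : Heis :=
  (ga x y,
   -I * (y 0 - x 0 - ga x y * x 1 - I * (ga x y * x 2) - (ga x y)^2/2),
   y 2 + I * (ga x y * x 0) + I * ((ga x y)^2/2 * x 1) - (1 + (ga x y)^2/2) * x 2
     + I * ((ga x y)^3/6))

noncomputable def act (x : Fin 3 → ℂ) (h : Heis) : Fin 3 → ℂ :=
  (AM h.1).mulVec x + vv h.1 h.2.1 h.2.2

lemma act_apply (x : Fin 3 → ℂ) (a b c : ℂ) : act x (a, b, c) =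
    ![x 0 + a * x 1 + I*a * x 2 + (a^2/2 + I*b),
      -a * x 0 + (1 - a^2/2) * x 1 + -(I*(a^2/2)) * x 2 + (a - a^3/6 - I*c),
      -(I*a) * x 0 + -(I*(a^2/2)) * x 1 + (1 + a^2/2) * x 2 + (-(I*(a^3/6)) + c)] := by
  funext j
  fin_cases j <;>
    simp [act, AM, vv, Matrix.mulVec, dotProduct, Fin.sum_univ_three] <;>
    all_goals ring

set_option maxHeartbeats 1000000 in
lemma left_inv (x : Fin 3 → ℂ) (a b c : ℂ) : gi x (act x (a, b, c)) = (a, b, c) := by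
  rw [act_apply]
  have hga : ga x ![x 0 + a * x 1 + I*a * x 2 + (a^2/2 + I*b),
      -a * x 0 + (1 - a^2/2) * x 1 + -(I*(a^2/2)) * x 2 + (a - a^3/6 - I*c),
      -(I*a) * x 0 + -(I*(a^2/2)) * x 1 + (1 + a^2/2) * x 2 + (-(I*(a^3/6)) + c)] = a := by
    simp [ga]
    all_goals ring_nf
    all_goals simp [Complex.I_sq, I3, I4, I5, I6, I7, I8, I9]
    all_goals ring
  refine Prod.ext ?_ (Prod.ext ?_ ?_)
  · show ga x _ = a
    exact hga
  · show -I * (_ - _ - ga x _ * x 1 - I * (ga x _ * x 2) - (ga x _)^2/2) = b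
    rw [hga]
    simp only [Matrix.cons_val_zero]
    all_goals ring_nf
    all_goals simp [Complex.I_sq, I3, I4, I5, I6, I7, I8, I9]
    all_goals ring
  · show _ + I * (ga x _ * x 0) + I * ((ga x _)^2/2 * x 1) - (1 + (ga x _)^2/2) * x 2
        + I * ((ga x _)^3/6) = c
    rw [hga]
    simp only [Matrix.cons_val_two, Matrix.tail_cons, Matrix.head_cons]
    all_goals ring_nf
    all_goals simp [Complex.I_sq, I3, I4, I5, I6, I7, I8, I9]
    all_goals ring

set_option maxHeartbeats 1000000 in
lemma right_inv (x y : Fin 3 → ℂ) : act x (gi x y) = y := by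
  have h1 : (gi x y).1 = ga x y := rfl
  have h2 : (gi x y).2.1 = -I * (y 0 - x 0 - ga x y * x 1 - I * (ga x y * x 2) - (ga x y)^2/2) := rfl
  have h3 : (gi x y).2.2 = y 2 + I * (ga x y * x 0) + I * ((ga x y)^2/2 * x 1)
      - (1 + (ga x y)^2/2) * x 2 + I * ((ga x y)^3/6) := rfl
  have : gi x y = ((gi x y).1, (gi x y).2.1, (gi x y).2.2) := rfl
  rw [this, h1, h2, h3, act_apply]
  funext j
  fin_cases j <;>
    simp only [ga, Matrix.cons_val_zero, Matrix.cons_val_one, Matrix.head_cons,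
      Matrix.cons_val_two, Matrix.tail_cons] <;>
    ring_nf <;>
    all_goals simp [Complex.I_sq, I3, I4, I5, I6, I7, I8, I9] <;>
    all_goals ring_nf

/-- Inside the holomorphic isometry group `O(3,ℂ) ⋉ ℂ³` of the
flat holomorphic Riemannian metric `dz₁² + dz₂² + dz₃²` on `ℂ³` (elements
represented as pairs `(A, v)` with `A Aᵀ = 1`, acting by `x ↦ A x + v`), there
is a closed subgroup isomorphic to the 3-dimensional complex Heisenberg group
that acts simply transitively on `ℂ³`. -/
theorem stmt_15 :
    ∃ φ : Heis → Matrix (Fin 3) (Fin 3) ℂ × (Fin 3 → ℂ),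
      -- φ is an injective continuous (holomorphic) group morphism into the
      -- isometry group, i.e. its image is a subgroup isomorphic to Heis
      Function.Injective φ ∧ Continuous φ ∧
      (∀ h h' : Heis, φ (h * h') =
        ((φ h).1 * (φ h').1, (φ h).1.mulVec (φ h').2 + (φ h).2)) ∧
      -- the linear parts are complex orthogonal: the image lies in O(3,ℂ) ⋉ ℂ³
      (∀ h : Heis, (φ h).1 * (φ h).1.transpose = 1) ∧
      -- the image is closed
      IsClosed (Set.range φ) ∧
      -- the affine action is simply transitive
      (∀ x : Fin 3 → ℂ,
        Function.Bijective fun h : Heis => (φ h).1.mulVec x + (φ h).2) := by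
  have hcont : Continuous phi := by
    have key : Continuous fun p : ℂ × ℂ × ℂ => (AM p.1, vv p.1 p.2.1 p.2.2) := by
      refine Continuous.prodMk ?_ ?_
      · refine continuous_pi fun i => continuous_pi fun j => ?_
        fin_cases i <;> fin_cases j <;> simp [AM] <;> fun_prop
      · refine continuous_pi fun j => ?_
        fin_cases j <;> simp [vv] <;> fun_prop
    exact key
  refine ⟨phi, ?_, hcont, ?_, ?_, ?_, ?_⟩
  · intro h h' e
    have := congrArg psi e
    rwa [psi_phi, psi_phi] at this
  · intro h h'
    refine Prod.ext ?_ ?_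
    · show AM (h * h').1 = AM h.1 * AM h'.1
      have h1 : (h * h').1 = h.1 + h'.1 := rfl
      rw [h1, AM_mul]
    · show vv (h * h').1 (h * h').2.1 (h * h').2.2 =
        (AM h.1).mulVec (vv h'.1 h'.2.1 h'.2.2) + vv h.1 h.2.1 h.2.2
      have h1 : (h * h').1 = h.1 + h'.1 := rfl
      have h2 : (h * h').2.1 = h.2.1 + h'.2.1 := rfl
      have h3 : (h * h').2.2 = h.2.2 + h'.2.2 + h.1 * h'.2.1 := rfl
      rw [h1, h2, h3, cocycle]
  · intro h
    exact AM_orth h.1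
  · have hpsi : Continuous psi := by unfold psi; fun_prop
    have hset : Set.range phi = {p | phi (psi p) = p} := by
      ext p
      constructor
      · rintro ⟨h, rfl⟩; simp [psi_phi]
      · intro hp; exact ⟨psi p, hp⟩
    rw [hset]
    exact isClosed_eq (hcont.comp hpsi) continuous_id
  · intro x
    have hact : (fun h : Heis => (phi h).1.mulVec x + (phi h).2) = act x := rfl
    rw [hact, Function.bijective_iff_has_inverse]
    refine ⟨gi x, ?_, ?_⟩
    · intro h
      obtain ⟨a, b, c⟩ := h
      exact left_inv x a b c
    · intro y
      exact right_inv x y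
end
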